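/- Let O be a 2-dimensional regular local ring with maximal ideal 𝔪 and residue field k, let M be a finitely generated O-module with a presentation 0 → Oⁿ →^A Oⁿ → M → 0, and let t ∈ 𝔪 be such that O/(t) is a discrete valuation ring and the image of det(A) in O/(t) has order λ (i.e., dim_k (O/(t, det A)) = λ). Then M ⊗ O/(t) has length λ over O/(t), and hence dim_k(M/𝔪M) ≤ λ. -/

import Mathlib

/-- `M` has a composition series of length `l`, i.e. `M` is an `R`-module of
length `l`. -/
def ModuleLengthEq (R M : Type*) [CommRing R] [AddCommGroup M] [Module R M]
    (l : ℕ) : Prop :=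
  ∃ s : CompositionSeries (Submodule R M), s.head = ⊥ ∧ s.last = ⊤ ∧
    s.length = l


open Submodule Function

section Helpers

variable {R : Type*} [CommRing R] {M N : Type*} [AddCommGroup M] [Module R M]
  [AddCommGroup N] [Module R N]

theorem mle_unique {l l' : ℕ} (h : ModuleLengthEq R M l) (h' : ModuleLengthEq R M l') :
    l = l' := by
  obtain ⟨s, hs1, hs2, rfl⟩ := h
  obtain ⟨s', hs1', hs2', rfl⟩ := h'
  obtain ⟨f, -⟩ := CompositionSeries.jordan_holder s s' (hs1.trans hs1'.symm)
    (hs2.trans hs2'.symm)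
  exact Fin.equiv_iff_eq.mp ⟨f⟩

theorem mle_of_orderIso {S Y : Type*} [CommRing S] [AddCommGroup Y] [Module S Y]
    (g : Submodule R M ≃o Submodule S Y) {l : ℕ} (h : ModuleLengthEq R M l) :
    ModuleLengthEq S Y l := by
  obtain ⟨s, hs1, hs2, rfl⟩ := h
  refine ⟨⟨s.length, fun i => g (s i), fun i => ?_⟩, ?_, ?_, rfl⟩
  · exact (apply_covBy_apply_iff g).mpr (s.step i)
  · show g s.head = ⊥; rw [hs1]; exact g.map_bot
  · show g s.last = ⊤; rw [hs2]; exact g.map_top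

end Helpers

section Helpers2

variable {R : Type*} [CommRing R] {M N : Type*} [AddCommGroup M] [Module R M]
  [AddCommGroup N] [Module R N]

theorem covby_map_subtype (P : Submodule R M) {p q : Submodule R P} (h : p ⋖ q) :
    p.map P.subtype ⋖ q.map P.subtype := by
  have hinj : Function.Injective P.subtype := P.injective_subtype
  constructor
  · exact Submodule.map_strictMono_of_injective hinj h.lt
  · intro c hc1 hc2
    have hcP : c ≤ P := le_trans hc2.le (Submodule.map_subtype_le P q)
    have hc : (Submodule.comap P.subtype c).map P.subtype = c := by
      rw [Submodule.map_comap_subtype]; exact inf_eq_right.mpr hcP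
    have h1 : p < Submodule.comap P.subtype c := by
      have := Submodule.comap_mono (f := P.subtype) hc1.le
      rw [Submodule.comap_map_eq_of_injective hinj] at this
      refine lt_of_le_of_ne this (fun e => hc1.ne ?_)
      rw [e, hc]
    have h2 : Submodule.comap P.subtype c < q := by
      have := Submodule.comap_mono (f := P.subtype) hc2.le
      rw [Submodule.comap_map_eq_of_injective hinj] at this
      refine lt_of_le_of_ne this (fun e => hc2.ne ?_)
      rw [← hc, e]
    exact h.2 h1 h2

theorem covby_comap_mkQ (P : Submodule R M) {p q : Submodule R (M ⧸ P)} (h : p ⋖ q) :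
    p.comap P.mkQ ⋖ q.comap P.mkQ := by
  have hsurj : Function.Surjective P.mkQ := P.mkQ_surjective
  have hmc : ∀ c : Submodule R (M ⧸ P), (c.comap P.mkQ).map P.mkQ = c :=
    fun c => Submodule.map_comap_eq_of_surjective hsurj c
  constructor
  · refine lt_of_le_of_ne (Submodule.comap_mono h.lt.le) (fun e => h.lt.ne ?_)
    rw [← hmc p, ← hmc q, e]
  · intro c hc1 hc2
    have hPc : P ≤ c := le_trans (fun x hx => by
      show P.mkQ x ∈ p
      have h0 : P.mkQ x = 0 := (Submodule.Quotient.mk_eq_zero P).mpr hx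
      rw [h0]; exact p.zero_mem) hc1.le
    have hc : (c.map P.mkQ).comap P.mkQ = c := by
      rw [Submodule.comap_map_eq, Submodule.ker_mkQ, sup_eq_left.mpr hPc]
    have h1 : p < c.map P.mkQ := by
      refine lt_of_le_of_ne ?_ (fun e => hc1.ne ?_)
      · rw [← hmc p]; exact Submodule.map_mono hc1.le
      · rw [e, hc]
    have h2 : c.map P.mkQ < q := by
      refine lt_of_le_of_ne ?_ (fun e => hc2.ne ?_)
      · rw [← hmc q]; exact Submodule.map_mono hc2.le
      · rw [← e, hc]
    exact h.2 h1 h2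

theorem mle_add (P : Submodule R M) {a b : ℕ} (ha : ModuleLengthEq R P a)
    (hb : ModuleLengthEq R (M ⧸ P) b) : ModuleLengthEq R M (a + b) := by
  obtain ⟨s, hs1, hs2, rfl⟩ := ha
  obtain ⟨u, hu1, hu2, rfl⟩ := hb
  let s' : CompositionSeries (Submodule R M) :=
    ⟨s.length, fun i => (s i).map P.subtype, fun i => covby_map_subtype P (s.step i)⟩
  let u' : CompositionSeries (Submodule R M) :=
    ⟨u.length, fun i => (u i).comap P.mkQ, fun i => covby_comap_mkQ P (u.step i)⟩
  have hconn : s'.last = u'.head := by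
    show (s.last).map P.subtype = (u.head).comap P.mkQ
    rw [hs2, hu1, Submodule.map_top, Submodule.range_subtype, Submodule.comap_bot,
      Submodule.ker_mkQ]
  refine ⟨RelSeries.smash s' u' hconn, ?_, ?_, ?_⟩
  · rw [RelSeries.head_smash]
    show (s.head).map P.subtype = ⊥
    rw [hs1, Submodule.map_bot]
  · rw [RelSeries.last_smash]
    show (u.last).comap P.mkQ = ⊤
    rw [hu2, Submodule.comap_top]
  · rfl

theorem mle_split (P : Submodule R M) {l : ℕ} (h : ModuleLengthEq R M l) :
    ∃ a b, ModuleLengthEq R P a ∧ ModuleLengthEq R (M ⧸ P) b ∧ a + b = l := by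
  have hfl : IsFiniteLength R M := by
    obtain ⟨s, hs1, hs2, -⟩ := h
    exact isFiniteLength_of_exists_compositionSeries ⟨s, hs1, hs2⟩
  obtain ⟨hnoe, hart⟩ := isFiniteLength_iff_isNoetherian_isArtinian.mp hfl
  obtain ⟨s, hs1, hs2⟩ := exists_compositionSeries_of_isNoetherian_isArtinian R P
  obtain ⟨u, hu1, hu2⟩ := exists_compositionSeries_of_isNoetherian_isArtinian R (M ⧸ P)
  refine ⟨s.length, u.length, ⟨s, hs1, hs2, rfl⟩, ⟨u, hu1, hu2, rfl⟩, ?_⟩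
  exact mle_unique (mle_add P ⟨s, hs1, hs2, rfl⟩ ⟨u, hu1, hu2, rfl⟩) h

theorem mle_of_linearEquiv (e : M ≃ₗ[R] N) {l : ℕ} (h : ModuleLengthEq R M l) :
    ModuleLengthEq R N l :=
  mle_of_orderIso (Submodule.orderIsoMapComap e) h

theorem mle_zero (h : Subsingleton M) : ModuleLengthEq R M 0 :=
  ⟨⟨0, fun _ => ⊥, fun i => i.elim0⟩, rfl, Subsingleton.elim _ _, rfl⟩

end Helpers2

section Helpers3

variable (O R X : Type*) [CommRing O] [CommRing R] [Algebra O R]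
  [AddCommGroup X] [Module R X] [Module O X] [IsScalarTower O R X]

/-- When `O → R` is surjective, `R`-submodules and `O`-submodules of an
`R`-module coincide. -/
noncomputable def restrictScalarsOrderIso (h : Function.Surjective (algebraMap O R)) :
    Submodule R X ≃o Submodule O X where
  toFun p := p.restrictScalars O
  invFun p :=
    { carrier := p
      add_mem' := fun ha hb => p.add_mem ha hb
      zero_mem' := p.zero_mem
      smul_mem' := fun r x hx => by
        obtain ⟨o, rfl⟩ := h r
        rw [algebraMap_smul]
        exact p.smul_mem o hx }
  left_inv p := by ext x; rfl
  right_inv p := by ext x; rfl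
  map_rel_iff' := Iff.rfl

theorem mle_restrictScalars (h : Function.Surjective (algebraMap O R)) {l : ℕ} :
    ModuleLengthEq R X l ↔ ModuleLengthEq O X l :=
  ⟨fun hl => mle_of_orderIso (restrictScalarsOrderIso O R X h) hl,
   fun hl => mle_of_orderIso (restrictScalarsOrderIso O R X h).symm hl⟩

end Helpers3

section Helpers4

variable {R : Type*} [CommRing R] {M N : Type*} [AddCommGroup M] [Module R M]
  [AddCommGroup N] [Module R N]

theorem mle_prod {a b : ℕ} (ha : ModuleLengthEq R M a) (hb : ModuleLengthEq R N b) :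
    ModuleLengthEq R (M × N) (a + b) := by
  refine mle_add (LinearMap.range (LinearMap.inl R M N)) ?_ ?_
  · exact mle_of_linearEquiv
      (LinearEquiv.ofInjective (LinearMap.inl R M N) LinearMap.inl_injective) ha
  · refine mle_of_linearEquiv ?_ hb
    have hker : LinearMap.ker (LinearMap.snd R M N) = LinearMap.range (LinearMap.inl R M N) :=
      LinearMap.ker_snd R M N
    exact ((Submodule.quotEquivOfEq _ _ hker.symm).trans
      ((LinearMap.snd R M N).quotKerEquivOfSurjective LinearMap.snd_surjective)).symm

/-- `Pi` of `Fin (n+1)` splits off the first factor, as modules. -/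
def piFinSuccLinearEquiv (n : ℕ) (X : Fin (n + 1) → Type*) [∀ i, AddCommGroup (X i)]
    [∀ i, Module R (X i)] :
    (∀ i, X i) ≃ₗ[R] X 0 × ∀ i : Fin n, X i.succ where
  toFun f := (f 0, fun i => f i.succ)
  invFun p := Fin.cons p.1 p.2
  map_add' f g := rfl
  map_smul' r f := rfl
  left_inv f := by
    ext i
    refine Fin.cases ?_ ?_ i
    · rfl
    · intro j; simp
  right_inv p := by
    refine Prod.ext ?_ ?_
    · rfl
    · funext j; simp

theorem mle_pi {n : ℕ} (X : Fin n → Type*) [∀ i, AddCommGroup (X i)] [∀ i, Module R (X i)]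
    (l : Fin n → ℕ) (h : ∀ i, ModuleLengthEq R (X i) (l i)) :
    ModuleLengthEq R (∀ i, X i) (∑ i, l i) := by
  induction n with
  | zero =>
    rw [Fin.sum_univ_zero]
    exact mle_zero (by
      refine ⟨fun f g => ?_⟩
      funext i
      exact i.elim0)
  | succ n ih =>
    rw [Fin.sum_univ_succ]
    exact mle_of_linearEquiv (piFinSuccLinearEquiv n X).symm
      (mle_prod (h 0) (ih _ _ (fun i => h i.succ)))

end Helpers4

section Helpers5

variable {R : Type*} [CommRing R] [IsDomain R]

theorem mle_quot_mul_split (a b : R) (ha : a ≠ 0) {l : ℕ}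
    (h : ModuleLengthEq R (R ⧸ Ideal.span ({a * b} : Set R)) l) :
    ∃ p q, ModuleLengthEq R (R ⧸ Ideal.span ({a} : Set R)) p ∧
      ModuleLengthEq R (R ⧸ Ideal.span ({b} : Set R)) q ∧ p + q = l := by
  set I : Ideal R := Ideal.span {a * b}
  have hIa : I ≤ Ideal.span {a} := by
    rw [Ideal.span_singleton_le_span_singleton]
    exact Dvd.intro b rfl
  set P : Submodule R (R ⧸ I) := Submodule.map I.mkQ (Ideal.span ({a} : Set R)) with hP
  obtain ⟨p', q', hp', hq', hpq⟩ := mle_split P h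
  -- the submodule `P` is isomorphic to `R ⧸ (b)`
  have φdef : (LinearMap.ker ((I.mkQ).comp (LinearMap.toSpanSingleton R R a))) =
      Ideal.span ({b} : Set R) := by
    ext x
    simp only [LinearMap.mem_ker, LinearMap.comp_apply, LinearMap.toSpanSingleton_apply,
      Submodule.mkQ_apply, Submodule.Quotient.mk_eq_zero]
    rw [Ideal.mem_span_singleton, Ideal.mem_span_singleton]
    constructor
    · rintro hdvd
      have : a * b ∣ a * x := by rwa [smul_eq_mul, mul_comm x a] at hdvd
      exact (mul_dvd_mul_iff_left ha).mp this
    · intro hdvd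
      rw [smul_eq_mul, mul_comm x a]
      exact mul_dvd_mul_left a hdvd
  have φrange : LinearMap.range ((I.mkQ).comp (LinearMap.toSpanSingleton R R a)) = P := by
    rw [LinearMap.range_comp, ← LinearMap.span_singleton_eq_range, hP]
  have eP : (R ⧸ Ideal.span ({b} : Set R)) ≃ₗ[R] P :=
    (Submodule.quotEquivOfEq _ _ φdef.symm).trans
      (((I.mkQ).comp (LinearMap.toSpanSingleton R R a)).quotKerEquivRange.trans
        (LinearEquiv.ofEq _ _ φrange))
  -- the quotient by `P` is isomorphic to `R ⧸ (a)`
  have eQ : ((R ⧸ I) ⧸ P) ≃ₗ[R] (R ⧸ Ideal.span ({a} : Set R)) :=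
    Submodule.quotientQuotientEquivQuotient I (Ideal.span {a}) hIa
  exact ⟨q', p', mle_of_linearEquiv eQ hq', mle_of_linearEquiv eP.symm hp', by omega⟩

theorem mle_quot_prod_split {n : ℕ} (c : Fin n → R) (hc : ∀ j, c j ≠ 0) {l : ℕ}
    (h : ModuleLengthEq R (R ⧸ Ideal.span ({∏ j, c j} : Set R)) l) :
    ∃ p : Fin n → ℕ, (∑ j, p j) = l ∧
      ∀ j, ModuleLengthEq R (R ⧸ Ideal.span ({c j} : Set R)) (p j) := by
  induction n generalizing l with
  | zero =>
    refine ⟨fun j => j.elim0, ?_, fun j => j.elim0⟩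
    rw [Fin.sum_univ_zero]
    have h1 : (∏ j : Fin 0, c j) = 1 := by simp
    rw [h1] at h
    have hsub : Subsingleton (R ⧸ Ideal.span ({(1 : R)} : Set R)) := by
      rw [Ideal.span_singleton_one]
      exact Submodule.Quotient.subsingleton_iff.mpr rfl
    exact mle_unique (mle_zero hsub) h
  | succ n ih =>
    rw [Fin.prod_univ_succ] at h
    obtain ⟨p0, q0, hp0, hq0, hpq⟩ := mle_quot_mul_split (c 0) (∏ j : Fin n, c j.succ)
      (hc 0) h
    obtain ⟨p, hsum, hp⟩ := ih (fun j => c j.succ) (fun j => hc j.succ) hq0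
    refine ⟨Fin.cons p0 p, ?_, ?_⟩
    · rw [Fin.sum_univ_succ]
      simp only [Fin.cons_zero, Fin.cons_succ]
      omega
    · intro j
      refine Fin.cases ?_ ?_ j
      · simpa using hp0
      · intro i; simpa using hp i

end Helpers5

section Helpers6

variable {K V : Type*} [Field K] [AddCommGroup V] [Module K V]

theorem covby_finrank [FiniteDimensional K V] {p q : Submodule K V} (h : p ⋖ q) :
    Module.finrank K q = Module.finrank K p + 1 := by
  have hle : p ≤ q := h.le
  have hsimple : IsSimpleModule K (q ⧸ Submodule.comap q.subtype p) :=
    (covBy_iff_quot_is_simple hle).mp h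
  have h1 : Module.finrank K (q ⧸ Submodule.comap q.subtype p) = 1 :=
    isSimpleModule_iff_finrank_eq_one.mp hsimple
  have h2 := Submodule.finrank_quotient_add_finrank (Submodule.comap q.subtype p)
  rw [h1] at h2
  have h3 : Module.finrank K (Submodule.comap q.subtype p) = Module.finrank K p :=
    (Submodule.comapSubtypeEquivOfLe hle).finrank_eq
  omega

theorem mle_finrank {l : ℕ} (h : ModuleLengthEq K V l) : Module.finrank K V = l := by
  obtain ⟨s, hs1, hs2, rfl⟩ := h
  have hfl : IsFiniteLength K V := isFiniteLength_of_exists_compositionSeries ⟨s, hs1, hs2⟩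
  have hnoe : IsNoetherian K V := (isFiniteLength_iff_isNoetherian_isArtinian.mp hfl).1
  have : FiniteDimensional K V := inferInstance
  have key : ∀ i : Fin (s.length + 1), Module.finrank K (s i) = (i : ℕ) := by
    intro i
    induction i using Fin.induction with
    | zero =>
      have : s 0 = ⊥ := hs1
      rw [this]
      simpa using finrank_bot K V
    | succ i ih =>
      have := covby_finrank (s.step i)
      rw [this, ih]
      simp
  have hlast := key (Fin.last s.length)
  have : s (Fin.last s.length) = ⊤ := hs2
  rw [this] at hlast
  rw [finrank_top K V] at hlast
  rw [hlast]
  simp [Fin.last]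

end Helpers6

section Smith

variable {R : Type*} [CommRing R] [IsDomain R] [IsPrincipalIdealRing R]

theorem mle_coker_matrix {n : ℕ} (B : Matrix (Fin n) (Fin n) R) (hd : B.det ≠ 0) {l : ℕ}
    (h : ModuleLengthEq R (R ⧸ Ideal.span ({B.det} : Set R)) l) :
    ModuleLengthEq R ((Fin n → R) ⧸ LinearMap.range (Matrix.toLin' B)) l := by
  classical
  set φ : (Fin n → R) →ₗ[R] (Fin n → R) := Matrix.toLin' B with hφ
  have hφinj : Function.Injective φ := by
    rw [← LinearMap.ker_eq_bot]
    rw [Submodule.eq_bot_iff]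
    intro v hv
    have hv' : B.mulVec v = 0 := by
      simpa [hφ, Matrix.toLin'_apply] using hv
    have : B.det • v = 0 := by
      have := congrArg (fun w => B.adjugate.mulVec w) hv'
      simpa [Matrix.mulVec_mulVec, Matrix.adjugate_mul, Matrix.smul_mulVec] using this
    funext i
    have : B.det * v i = 0 := congrFun this i
    rcases mul_eq_zero.mp this with h' | h'
    · exact absurd h' hd
    · exact h'
  set N : Submodule R (Fin n → R) := LinearMap.range φ with hNdef
  obtain ⟨m, ⟨bM, bN, f, aa, snf⟩⟩ := Submodule.smithNormalForm (Pi.basisFun R (Fin n)) N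
  -- the rank of `N` is `n`
  have heq : m = n := by
    have eφ : (Fin n → R) ≃ₗ[R] N := LinearEquiv.ofInjective φ hφinj
    let bN2 : Module.Basis (Fin n) R N := (Pi.basisFun R (Fin n)).map eφ
    exact Fin.equiv_iff_eq.mp ⟨bN.indexEquiv bN2⟩
  subst heq
  have hfbij : Function.Bijective f := (Finite.injective_iff_bijective).mp f.injective
  set σ : Fin m ≃ Fin m := Equiv.ofBijective f hfbij with hσ
  set c : Fin m → R := fun j => aa (σ.symm j) with hc
  have hbc : ∀ j, ((bN (σ.symm j) : Fin m → R)) = c j • bM j := by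
    intro j
    have hfs : f (σ.symm j) = j := σ.apply_symm_apply j
    rw [snf (σ.symm j), hfs, hc]
  -- membership in `N` via coordinates
  have NspanEq : N = Submodule.span R (Set.range (fun i => (bN i : Fin m → R))) := by
    refine le_antisymm ?_ ?_
    · intro y hy
      have hmem : (⟨y, hy⟩ : N) ∈ Submodule.span R (Set.range bN) := Module.Basis.mem_span bN _
      have := Submodule.mem_map_of_mem (f := N.subtype) hmem
      rw [Submodule.map_span] at this
      rw [show (fun i => (bN i : Fin m → R)) = N.subtype ∘ bN from rfl, Set.range_comp]
      exact this
    · rw [Submodule.span_le]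
      rintro _ ⟨i, rfl⟩
      exact (bN i).2
  have hN : ∀ y : Fin m → R, y ∈ N ↔ ∀ j, bM.repr y j ∈ Ideal.span ({c j} : Set R) := by
    intro y
    constructor
    · intro hy
      rw [NspanEq] at hy
      induction hy using Submodule.span_induction with
      | mem x hx =>
        obtain ⟨i, rfl⟩ := hx
        intro j
        show bM.repr ((bN i : Fin m → R)) j ∈ Ideal.span ({c j} : Set R)
        rw [snf i]
        rw [map_smul, Module.Basis.repr_self]
        rw [Finsupp.smul_apply, Finsupp.single_apply]
        by_cases hij : f i = j
        · have hsj : σ.symm j = i := by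
            apply σ.injective
            rw [σ.apply_symm_apply]
            exact hij.symm ▸ rfl
          rw [if_pos hij]
          rw [hc]
          simp only [hsj]
          rw [smul_eq_mul, mul_one]
          exact Ideal.mem_span_singleton_self _
        · rw [if_neg hij, smul_zero]
          exact Ideal.zero_mem _
      | zero => intro j; rw [map_zero]; exact Ideal.zero_mem _
      | add x y _ _ hx hy => intro j; rw [map_add]; exact Ideal.add_mem _ (hx j) (hy j)
      | smul r x _ hx => intro j; rw [map_smul]; exact Ideal.mul_mem_left _ r (hx j)
    · intro hy
      have : y = ∑ j, bM.repr y j • bM j := (Module.Basis.sum_repr bM y).symm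
      rw [this]
      refine Submodule.sum_mem N ?_
      intro j _
      obtain ⟨r, hr⟩ := Ideal.mem_span_singleton'.mp (hy j)
      rw [← hr, mul_smul, ← hbc j]
      exact Submodule.smul_mem N r (bN (σ.symm j)).2
  -- the quotient map to the product of cyclic modules
  set ψ : (Fin m → R) →ₗ[R] (∀ j : Fin m, R ⧸ Ideal.span ({c j} : Set R)) :=
    LinearMap.pi (fun j => (Ideal.span ({c j} : Set R)).mkQ.comp (bM.coord j)) with hψ
  have kerψ : LinearMap.ker ψ = N := by
    ext y
    rw [LinearMap.mem_ker, hN]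
    rw [funext_iff]
    apply forall_congr'
    intro j
    rw [hψ]
    simp only [LinearMap.pi_apply, LinearMap.comp_apply, Module.Basis.coord_apply,
      Submodule.mkQ_apply, Pi.zero_apply]
    exact Submodule.Quotient.mk_eq_zero _
  have surjψ : Function.Surjective ψ := by
    intro w
    have hrep : ∀ j, ∃ u : R, Submodule.Quotient.mk u = w j := fun j =>
      Submodule.Quotient.mk_surjective _ (w j)
    choose u hu using hrep
    refine ⟨∑ j, u j • bM j, ?_⟩
    funext j
    rw [hψ]
    simp only [LinearMap.pi_apply, LinearMap.comp_apply, Module.Basis.coord_apply,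
      Submodule.mkQ_apply]
    rw [Module.Basis.repr_sum_self]
    exact hu j
  have eQuot : ((Fin m → R) ⧸ N) ≃ₗ[R] (∀ j : Fin m, R ⧸ Ideal.span ({c j} : Set R)) :=
    (Submodule.quotEquivOfEq N (LinearMap.ker ψ) kerψ.symm).trans
      (ψ.quotKerEquivOfSurjective surjψ)
  -- determinant computation
  have prodc : Associated B.det (∏ j, c j) := by
    have h1 : LinearMap.det φ = B.det := by rw [hφ]; exact LinearMap.det_toLin' B
    have hcomp : N.subtype ∘ₗ ((LinearEquiv.ofInjective φ hφinj) :
        (Fin m → R) →ₗ[R] N) = φ := LinearMap.ext fun x => rfl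
    set e' : (Fin m → R) ≃ₗ[R] N := bM.equiv bN σ.symm with he'
    have hassoc : Associated
        (LinearMap.det (N.subtype ∘ₗ ((LinearEquiv.ofInjective φ hφinj) :
          (Fin m → R) →ₗ[R] N)))
        (LinearMap.det (N.subtype ∘ₗ (e' : (Fin m → R) →ₗ[R] N))) :=
      LinearMap.associated_det_comp_equiv N.subtype (LinearEquiv.ofInjective φ hφinj) e'
    have hmat : LinearMap.toMatrix bM bM (N.subtype ∘ₗ (e' : (Fin m → R) →ₗ[R] N)) =
        Matrix.diagonal c := by
      ext k j
      rw [LinearMap.toMatrix_apply, LinearMap.comp_apply]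
      have : (e' : (Fin m → R) →ₗ[R] N) (bM j) = bN (σ.symm j) := by
        rw [he']
        exact bM.equiv_apply j bN σ.symm
      rw [this]
      show bM.repr ((bN (σ.symm j) : Fin m → R)) k = Matrix.diagonal c k j
      rw [hbc j, map_smul, Module.Basis.repr_self, Finsupp.smul_apply, Finsupp.single_apply]
      by_cases hkj : k = j
      · subst hkj; rw [if_pos rfl, Matrix.diagonal_apply_eq, smul_eq_mul, mul_one]
      · rw [if_neg (Ne.symm hkj), Matrix.diagonal_apply_ne _ hkj, smul_zero]
    have h2 : LinearMap.det (N.subtype ∘ₗ (e' : (Fin m → R) →ₗ[R] N)) = ∏ j, c j := by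
      rw [← LinearMap.det_toMatrix bM, hmat, Matrix.det_diagonal]
    rw [← h1, ← hcomp, ← h2]
    exact hassoc
  have hprodne : (∏ j, c j) ≠ 0 := by
    obtain ⟨u, hu⟩ := prodc
    rw [← hu]
    exact mul_ne_zero hd u.ne_zero
  have hcne : ∀ j, c j ≠ 0 := by
    rw [Finset.prod_ne_zero_iff] at hprodne
    exact fun j => hprodne j (Finset.mem_univ j)
  have spaneq : Ideal.span ({B.det} : Set R) = Ideal.span ({∏ j, c j} : Set R) :=
    Ideal.span_singleton_eq_span_singleton.mpr prodc
  rw [spaneq] at h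
  obtain ⟨p, hsum, hp⟩ := mle_quot_prod_split c hcne h
  have hpi := mle_pi (fun j => R ⧸ Ideal.span ({c j} : Set R)) p hp
  rw [hsum] at hpi
  exact mle_of_linearEquiv eQuot.symm hpi

end Smith


/-- Let `O` be a 2-dimensional regular local ring, `M` a finitely generated
`O`-module with presentation `0 → Oⁿ →^A Oⁿ → M → 0`, and `t ∈ 𝔪` with
`O/(t)` a DVR such that `O/(t, det A)` has length `λ`.  Then `M ⊗ O/(t)`
has length `λ`, and hence `dim_k (M/𝔪M) ≤ λ`. -/
theorem length_bound_of_presentation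
    (O : Type*) [CommRing O] [IsLocalRing O] [IsNoetherianRing O]
    (hdim : ringKrullDim O = 2)
    (hreg : ∃ u v : O, Ideal.span {u, v} = IsLocalRing.maximalIdeal O)
    (M : Type*) [AddCommGroup M] [Module O M] [Module.Finite O M]
    (n : ℕ) (A : Matrix (Fin n) (Fin n) O)
    (π : (Fin n → O) →ₗ[O] M) (hπ : Function.Surjective π)
    (hker : LinearMap.ker π = LinearMap.range (Matrix.toLin' A))
    (hinj : Function.Injective (Matrix.toLin' A))
    (t : O) (ht : t ∈ IsLocalRing.maximalIdeal O)
    (hDVR : ∃ _ : IsDomain (O ⧸ Ideal.span ({t} : Set O)),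
      IsDiscreteValuationRing (O ⧸ Ideal.span ({t} : Set O)))
    (lam : ℕ)
    (hlen : ModuleLengthEq O (O ⧸ Ideal.span {t, A.det}) lam) :
    ModuleLengthEq O (M ⧸ ((Ideal.span {t} : Ideal O) • ⊤ : Submodule O M)) lam ∧
    Module.finrank (O ⧸ IsLocalRing.maximalIdeal O)
      (M ⧸ ((IsLocalRing.maximalIdeal O : Ideal O) • ⊤ : Submodule O M)) ≤ lam := by
  classical
  obtain ⟨hdom, hdvr⟩ := hDVR
  haveI := hdom
  haveI := hdvr
  set I : Ideal O := Ideal.span {t} with hI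
  set d : O := A.det with hd
  set J : Ideal O := Ideal.span {t, d} with hJ
  have hsurj : Function.Surjective (algebraMap O (O ⧸ I)) := by
    rw [Ideal.Quotient.algebraMap_eq]
    exact Ideal.Quotient.mk_surjective
  -- Step 1: the image of the determinant is nonzero.
  have hdbar : Ideal.Quotient.mk I d ≠ 0 := by
    intro h0
    have hdI : d ∈ I := Ideal.Quotient.eq_zero_iff_mem.mp h0
    have hJI : J = I := by
      apply le_antisymm
      · rw [hJ, Ideal.span_le]
        rintro x hx
        rcases hx with rfl | hx
        · exact Ideal.subset_span rfl
        · rw [Set.mem_singleton_iff] at hx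
          subst hx
          exact hdI
      · exact Ideal.span_mono (Set.singleton_subset_iff.mpr (Set.mem_insert t {d}))
    rw [hJI] at hlen
    -- `O ⧸ I` would have finite length over `O`, hence be an Artinian domain, hence a field
    have hfl : IsFiniteLength O (O ⧸ I) := by
      obtain ⟨s, hs1, hs2, -⟩ := hlen
      exact isFiniteLength_of_exists_compositionSeries ⟨s, hs1, hs2⟩
    have hartO : IsArtinian O (O ⧸ I) := (isFiniteLength_iff_isNoetherian_isArtinian.mp hfl).2
    haveI hartR : IsArtinian (O ⧸ I) (O ⧸ I) := by
      constructor
      exact ((restrictScalarsOrderIso O (O ⧸ I) (O ⧸ I)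
        hsurj).toOrderEmbedding.ltEmbedding).wellFounded hartO.wf
    haveI : (⊥ : Ideal (O ⧸ I)).IsPrime := Ideal.bot_prime
    have hmax : (⊥ : Ideal (O ⧸ I)).IsMaximal := IsArtinianRing.isMaximal_of_isPrime ⊥
    have hnf := IsDiscreteValuationRing.not_isField (O ⧸ I)
    obtain ⟨K, hK1, hK2⟩ := Ring.not_isField_iff_exists_ideal_bot_lt_and_lt_top.mp hnf
    exact hK2.ne (hmax.out.2 K hK1)
  -- Step 2: transfer the length hypothesis to `(O⧸I) ⧸ (d̄)`
  have hIJ : I ≤ J :=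
    Ideal.span_mono (Set.singleton_subset_iff.mpr (Set.mem_insert t {d}))
  have e1 : ((O ⧸ I) ⧸ (Submodule.map I.mkQ (J : Submodule O O))) ≃ₗ[O] O ⧸ J :=
    Submodule.quotientQuotientEquivQuotient I J hIJ
  have hmapJ : Submodule.map I.mkQ (J : Submodule O O) =
      Submodule.restrictScalars O
        (Ideal.span ({Ideal.Quotient.mk I d} : Set (O ⧸ I))) := by
    show Submodule.map I.mkQ (J : Submodule O O) =
      Submodule.restrictScalars O
        (Submodule.span (O ⧸ I) ({Ideal.Quotient.mk I d} : Set (O ⧸ I)))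
    rw [Submodule.restrictScalars_span O (O ⧸ I) hsurj ({Ideal.Quotient.mk I d} : Set (O ⧸ I))]
    rw [hJ]
    show Submodule.map I.mkQ (Submodule.span O ({t, d} : Set O)) = _
    rw [Submodule.map_span]
    have himg : I.mkQ '' ({t, d} : Set O) = {(0 : O ⧸ I), Ideal.Quotient.mk I d} := by
      rw [Set.image_insert_eq, Set.image_singleton]
      congr 1
      rw [Submodule.mkQ_apply, Submodule.Quotient.mk_eq_zero]
      exact Ideal.subset_span rfl
    rw [himg]
    rw [Submodule.span_insert_zero]
  have hlen2 : ModuleLengthEq (O ⧸ I)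
      ((O ⧸ I) ⧸ Ideal.span ({Ideal.Quotient.mk I d} : Set (O ⧸ I))) lam := by
    rw [mle_restrictScalars O (O ⧸ I) _ hsurj]
    refine mle_of_linearEquiv
      (Submodule.Quotient.restrictScalarsEquiv O
        (Ideal.span ({Ideal.Quotient.mk I d} : Set (O ⧸ I)) :
          Submodule (O ⧸ I) (O ⧸ I))) ?_
    rw [← hmapJ]
    exact mle_of_linearEquiv e1.symm hlen
  -- Step 3: apply the Smith normal form computation
  set B : Matrix (Fin n) (Fin n) (O ⧸ I) := A.map (Ideal.Quotient.mk I) with hB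
  have hBdet : B.det = Ideal.Quotient.mk I d := by
    rw [hB, hd]
    exact (RingHom.map_det (Ideal.Quotient.mk I) A).symm
  have hBne : B.det ≠ 0 := by rw [hBdet]; exact hdbar
  have hlen3 : ModuleLengthEq (O ⧸ I)
      ((Fin n → O ⧸ I) ⧸ LinearMap.range (Matrix.toLin' B)) lam := by
    apply mle_coker_matrix B hBne
    rw [hBdet]
    exact hlen2
  have hlen3O : ModuleLengthEq O
      ((Fin n → O ⧸ I) ⧸ LinearMap.range (Matrix.toLin' B)) lam :=
    (mle_restrictScalars O (O ⧸ I) _ hsurj).mp hlen3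
  -- Step 4: identify `M ⧸ tM` with the cokernel of `B`
  set q : (Fin n → O) →ₗ[O] (Fin n → O ⧸ I) :=
    LinearMap.pi (fun i => (Algebra.linearMap O (O ⧸ I)).comp (LinearMap.proj i)) with hq
  have hqapp : ∀ (v : Fin n → O) (i : Fin n), q v i = Ideal.Quotient.mk I (v i) := by
    intro v i
    rw [hq]
    simp [Algebra.linearMap, Ideal.Quotient.algebraMap_eq]
  have hqsurj : Function.Surjective q := by
    intro w
    have : ∀ i, ∃ u : O, Ideal.Quotient.mk I u = w i := fun i =>
      Ideal.Quotient.mk_surjective (w i)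
    choose u hu using this
    exact ⟨u, funext fun i => by rw [hqapp]; exact hu i⟩
  have hqA : ∀ v, q ((Matrix.toLin' A) v) = (Matrix.toLin' B) (q v) := by
    intro v
    funext i
    rw [hqapp]
    simp only [Matrix.toLin'_apply, Matrix.mulVec, dotProduct]
    rw [map_sum]
    refine Finset.sum_congr rfl fun j _ => ?_
    rw [map_mul, hB, Matrix.map_apply, hqapp]
  have hkerq : LinearMap.ker q = (I • ⊤ : Submodule O (Fin n → O)) := by
    apply le_antisymm
    · intro x hx
      have hx0 : q x = 0 := hx
      have hxi : ∀ i, x i ∈ I := fun i => by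
        have : q x i = 0 := by rw [hx0]; rfl
        rw [hqapp] at this
        exact Ideal.Quotient.eq_zero_iff_mem.mp this
      have : ∀ i, ∃ y, y * t = x i := fun i => Ideal.mem_span_singleton'.mp (hxi i)
      choose y hy using this
      have hxt : x = t • y := funext fun i => by
        rw [Pi.smul_apply, smul_eq_mul, mul_comm]
        exact (hy i).symm
      rw [hxt]
      exact Submodule.smul_mem_smul (Ideal.mem_span_singleton_self t) trivial
    · rw [Submodule.smul_le]
      intro r hr x _
      show q (r • x) = 0
      rw [map_smul]
      funext i
      rw [Pi.smul_apply, hqapp]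
      show r • Ideal.Quotient.mk I (x i) = 0
      rw [← algebraMap_smul (O ⧸ I) r, Ideal.Quotient.algebraMap_eq,
        Ideal.Quotient.eq_zero_iff_mem.mpr hr, zero_smul]
  set NB : Submodule (O ⧸ I) (Fin n → O ⧸ I) := LinearMap.range (Matrix.toLin' B) with hNB
  set F : (Fin n → O) →ₗ[O] ((Fin n → O ⧸ I) ⧸ NB) :=
    (NB.mkQ.restrictScalars O).comp q with hF
  have hFsurj : Function.Surjective F :=
    (Submodule.mkQ_surjective NB).comp hqsurj
  have hFker : LinearMap.ker F = LinearMap.range (Matrix.toLin' A) ⊔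
      (I • ⊤ : Submodule O (Fin n → O)) := by
    apply le_antisymm
    · intro x hx
      have : q x ∈ NB := by
        have hx0 : F x = 0 := hx
        rw [hF] at hx0
        have : Submodule.Quotient.mk (q x) = (0 : (Fin n → O ⧸ I) ⧸ NB) := hx0
        exact (Submodule.Quotient.mk_eq_zero NB).mp this
      obtain ⟨w, hw⟩ := this
      obtain ⟨u, hu⟩ := hqsurj w
      have hsub : x - (Matrix.toLin' A) u ∈ LinearMap.ker q := by
        show q (x - (Matrix.toLin' A) u) = 0
        rw [map_sub, hqA, hu, hw, sub_self]
      rw [hkerq] at hsub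
      have hx' : x = (Matrix.toLin' A) u + (x - (Matrix.toLin' A) u) := by ring_nf
      rw [hx']
      exact Submodule.add_mem_sup (LinearMap.mem_range_self _ u) hsub
    · rw [sup_le_iff]
      constructor
      · rintro _ ⟨v, rfl⟩
        show F ((Matrix.toLin' A) v) = 0
        rw [hF]
        show Submodule.Quotient.mk (q ((Matrix.toLin' A) v)) = 0
        rw [hqA, Submodule.Quotient.mk_eq_zero]
        exact LinearMap.mem_range_self _ (q v)
      · intro x hx
        show F x = 0
        rw [hF]
        have : q x = 0 := by rw [← hkerq] at hx; exact hx
        show Submodule.Quotient.mk (q x) = 0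
        rw [this]
        exact (Submodule.Quotient.mk_eq_zero NB).mpr NB.zero_mem
  set G : (Fin n → O) →ₗ[O] (M ⧸ (I • ⊤ : Submodule O M)) :=
    (Submodule.mkQ (I • ⊤ : Submodule O M)).comp π with hG
  have hGsurj : Function.Surjective G :=
    (Submodule.mkQ_surjective _).comp hπ
  have hmaptop : Submodule.map π ⊤ = ⊤ := by
    rw [Submodule.map_top]
    exact LinearMap.range_eq_top.mpr hπ
  have hsm : (I • ⊤ : Submodule O M) =
      Submodule.map π (I • ⊤ : Submodule O (Fin n → O)) := by
    rw [Submodule.map_smul'', hmaptop]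
  have hGker : LinearMap.ker G = LinearMap.range (Matrix.toLin' A) ⊔
      (I • ⊤ : Submodule O (Fin n → O)) := by
    apply le_antisymm
    · intro x hx
      have hπx : π x ∈ (I • ⊤ : Submodule O M) := by
        have : G x = 0 := hx
        rw [hG] at this
        have h2 : Submodule.Quotient.mk (π x) = (0 : M ⧸ (I • ⊤ : Submodule O M)) := this
        exact (Submodule.Quotient.mk_eq_zero _).mp h2
      rw [hsm] at hπx
      obtain ⟨y, hy, hyx⟩ := hπx
      have hsub : x - y ∈ LinearMap.ker π := by
        rw [LinearMap.mem_ker, map_sub, hyx, sub_self]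
      rw [hker] at hsub
      have hx' : x = (x - y) + y := by ring_nf
      rw [hx']
      exact Submodule.add_mem_sup hsub hy
    · rw [sup_le_iff]
      constructor
      · intro x hx
        show G x = 0
        rw [hG]
        have : π x = 0 := by rw [← hker] at hx; exact hx
        show Submodule.Quotient.mk (π x) = 0
        rw [this]
        exact (Submodule.Quotient.mk_eq_zero _).mpr (Submodule.zero_mem _)
      · intro x hx
        show G x = 0
        rw [hG]
        show Submodule.Quotient.mk (π x) = 0
        rw [Submodule.Quotient.mk_eq_zero]
        rw [hsm]
        exact Submodule.mem_map_of_mem hx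
  have efinal : (M ⧸ (I • ⊤ : Submodule O M)) ≃ₗ[O] ((Fin n → O ⧸ I) ⧸ NB) :=
    ((G.quotKerEquivOfSurjective hGsurj).symm.trans
      (Submodule.quotEquivOfEq _ _ (hGker.trans hFker.symm))).trans
      (F.quotKerEquivOfSurjective hFsurj)
  have goal1 : ModuleLengthEq O (M ⧸ (I • ⊤ : Submodule O M)) lam :=
    mle_of_linearEquiv efinal.symm hlen3O
  refine ⟨goal1, ?_⟩
  -- Part 2: the fibre dimension is at most `lam`
  set T : Submodule O M := (IsLocalRing.maximalIdeal O : Ideal O) • ⊤ with hT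
  have hsubT : (I • ⊤ : Submodule O M) ≤ T := by
    rw [hT]
    refine Submodule.smul_mono_left ?_
    rw [hI, Ideal.span_le, Set.singleton_subset_iff]
    exact ht
  obtain ⟨a, b, ha, hb, hab⟩ :=
    mle_split (Submodule.map (Submodule.mkQ (I • ⊤ : Submodule O M)) T) goal1
  have eT : ((M ⧸ (I • ⊤ : Submodule O M)) ⧸
      Submodule.map (Submodule.mkQ (I • ⊤ : Submodule O M)) T) ≃ₗ[O] M ⧸ T :=
    Submodule.quotientQuotientEquivQuotient (I • ⊤ : Submodule O M) T hsubT
  have hbV : ModuleLengthEq O (M ⧸ T) b := mle_of_linearEquiv eT hb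
  have hksurj : Function.Surjective (algebraMap O (O ⧸ IsLocalRing.maximalIdeal O)) := by
    rw [Ideal.Quotient.algebraMap_eq]
    exact Ideal.Quotient.mk_surjective
  have hbk : ModuleLengthEq (O ⧸ IsLocalRing.maximalIdeal O) (M ⧸ T) b :=
    (mle_restrictScalars O (O ⧸ IsLocalRing.maximalIdeal O) (M ⧸ T) hksurj).mpr hbV
  letI : Field (O ⧸ IsLocalRing.maximalIdeal O) := Ideal.Quotient.field _
  have hfr : Module.finrank (O ⧸ IsLocalRing.maximalIdeal O) (M ⧸ T) = b :=
    mle_finrank hbk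
  rw [hfr]
  omega
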